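/- The coefficients of the main characteristic polynomial m_G of a graph G are rational numbers (indeed integers): if μ is a main eigenvalue of G then every algebraic conjugate of μ over ℚ that is an eigenvalue of G is also main, so m_G ∈ ℤ[x]. -/

import Mathlib

open Matrix Polynomial

/-- `μ` is a main eigenvalue of the matrix `A`. -/
def Matrix.IsMainEig {n : ℕ} (A : Matrix (Fin n) (Fin n) ℝ) (μ : ℝ) : Prop :=
  ∃ v : Fin n → ℝ, A *ᵥ v = μ • v ∧ v ⬝ᵥ (fun _ => (1 : ℝ)) ≠ 0

/-!
The polynomials `p` with `p(A) 𝟙 = 0` form an ideal whose monic generator is the minimal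
polynomial of `A` on the Krylov space of `𝟙`. For a real symmetric `A` this generator is
`∏ (X - μ)` over the main eigenvalues: pairing `p(A) 𝟙 = 0` with an eigenvector `v` of
eigenvalue `μ` gives `p(μ) (v ⬝ 𝟙) = 0`, and conversely, expanding `𝟙` in an orthonormal
eigenbasis, a polynomial vanishing at the main eigenvalues kills `𝟙`.

The generator does not change when ℚ is enlarged to ℝ: if it has degree `d`, the Krylov vectors
`𝟙, A 𝟙, …, A^(d-1) 𝟙` are linearly independent over ℚ, hence over ℝ, so no nonzero real
polynomial of degree `< d` kills `𝟙`. Over ℚ the generator divides the characteristic polynomial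
of the integer adjacency matrix, so by Gauss's lemma it has integer coefficients.
-/

namespace Matrix

theorem mulVec_injective_map {K L : Type*} [Field K] [Field L] {m d : Type*} [Fintype m]
    [Fintype d] [DecidableEq d] (f : K →+* L) {M : Matrix m d K}
    (hM : Function.Injective M.mulVec) : Function.Injective (M.map f).mulVec := by
  classical
  obtain ⟨g, hg⟩ := (toLin' M).exists_leftInverse_of_injective (LinearMap.ker_eq_bot.mpr hM)
  have hNM : LinearMap.toMatrix' g * M = 1 := by
    simpa [LinearMap.toMatrix'_comp] using congrArg LinearMap.toMatrix' hg
  refine Function.LeftInverse.injective (g := ((LinearMap.toMatrix' g).map f).mulVec) fun x => ?_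
  rw [mulVec_mulVec, ← Matrix.map_mul, hNM, Matrix.map_one _ f.map_zero f.map_one, one_mulVec]

section Krylov

variable {K : Type*} [Field K] {n : Type*} [Fintype n] [DecidableEq n]

def krylovIdeal (A : Matrix n n K) (v : n → K) : Ideal K[X] where
  carrier := {p | aeval A p *ᵥ v = 0}
  add_mem' {p q} hp hq := by
    simp only [Set.mem_ofPred_eq, map_add, add_mulVec] at *
    rw [hp, hq, add_zero]
  zero_mem' := by simp
  smul_mem' q p hp := by
    simp only [Set.mem_ofPred_eq, smul_eq_mul, map_mul] at *
    rw [← mulVec_mulVec, hp, mulVec_zero]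

theorem mem_krylovIdeal {A : Matrix n n K} {v : n → K} {p : K[X]} :
    p ∈ krylovIdeal A v ↔ aeval A p *ᵥ v = 0 := Iff.rfl

open scoped Classical in
noncomputable def krylovMinpoly (A : Matrix n n K) (v : n → K) : K[X] :=
  normalize (Submodule.IsPrincipal.generator (krylovIdeal A v))

def krylovMatrix (A : Matrix n n K) (v : n → K) (d : ℕ) : Matrix n (Fin d) K :=
  of fun i k => (A ^ (k : ℕ) *ᵥ v) i

variable (A : Matrix n n K) (v : n → K)

theorem charpoly_mem_krylovIdeal : A.charpoly ∈ krylovIdeal A v := by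
  rw [mem_krylovIdeal, aeval_self_charpoly, zero_mulVec]

theorem krylovMinpoly_dvd_iff {p : K[X]} : krylovMinpoly A v ∣ p ↔ p ∈ krylovIdeal A v := by
  classical
  rw [krylovMinpoly, normalize_dvd_iff, Submodule.IsPrincipal.mem_iff_generator_dvd]

theorem krylovMinpoly_mem_krylovIdeal : krylovMinpoly A v ∈ krylovIdeal A v :=
  (krylovMinpoly_dvd_iff A v).mp dvd_rfl

theorem krylovMinpoly_monic : (krylovMinpoly A v).Monic := by
  classical
  refine monic_normalize fun h => A.charpoly_monic.ne_zero ?_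
  have := (Submodule.IsPrincipal.mem_iff_generator_dvd _).mp (charpoly_mem_krylovIdeal A v)
  rwa [h, zero_dvd_iff] at this

theorem eq_krylovMinpoly {g : K[X]} (hg : g.Monic) (hmem : g ∈ krylovIdeal A v)
    (hdvd : ∀ p ∈ krylovIdeal A v, g ∣ p) : krylovMinpoly A v = g :=
  eq_of_monic_of_associated (krylovMinpoly_monic A v) hg <| associated_of_dvd_dvd
    ((krylovMinpoly_dvd_iff A v).mpr hmem) (hdvd _ (krylovMinpoly_mem_krylovIdeal A v))

theorem krylovMatrix_mulVec {d : ℕ} (c : Fin d → K) :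
    krylovMatrix A v d *ᵥ c = aeval A ((degreeLTEquiv K d).symm c : K[X]) *ᵥ v := by
  have hc : ((degreeLTEquiv K d).symm c : K[X]) = ∑ k : Fin d, monomial k (c k) := rfl
  rw [hc, map_sum, sum_mulVec]
  ext i
  simp only [aeval_monomial, ← Algebra.smul_def, smul_mulVec, Finset.sum_apply, Pi.smul_apply,
    smul_eq_mul, mulVec, dotProduct, krylovMatrix, of_apply]
  exact Finset.sum_congr rfl fun k _ => mul_comm _ _

theorem mulVec_injective_krylovMatrix :
    Function.Injective (krylovMatrix A v (krylovMinpoly A v).natDegree).mulVec := by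
  set d := (krylovMinpoly A v).natDegree
  refine (injective_iff_map_eq_zero (mulVecLin (krylovMatrix A v d))).mpr fun c hc => ?_
  set p := (degreeLTEquiv K d).symm c
  have hp : (p : K[X]) ∈ krylovIdeal A v := by
    rw [mem_krylovIdeal, ← krylovMatrix_mulVec]
    exact hc
  have hp0 : p = 0 := by
    refine Subtype.ext (by_contra fun h => ?_)
    have hle := natDegree_le_of_dvd ((krylovMinpoly_dvd_iff A v).mpr hp) h
    have hlt := (natDegree_lt_iff_degree_lt h).mpr (mem_degreeLT.mp p.2)
    omega
  simpa [p] using congrArg (degreeLTEquiv K d) hp0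

end Krylov

section FieldExtension

variable {K : Type*} (L : Type*) [Field K] [Field L] [Algebra K L] {n : Type*} [Fintype n]
  [DecidableEq n] (A : Matrix n n K) (v : n → K)

theorem aeval_map_algebraMap (p : K[X]) :
    aeval (A.map (algebraMap K L)) (p.map (algebraMap K L)) =
      (aeval A p).map (algebraMap K L) := by
  rw [Polynomial.aeval_map_algebraMap]
  exact aeval_algHom_apply (Algebra.ofId K L).mapMatrix A p

theorem krylovMatrix_map (d : ℕ) :
    krylovMatrix (A.map (algebraMap K L)) (algebraMap K L ∘ v) d =
      (krylovMatrix A v d).map (algebraMap K L) := by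
  ext i k
  simp [krylovMatrix, ← Matrix.map_pow, RingHom.map_mulVec]

theorem map_mem_krylovIdeal {p : K[X]} (hp : p ∈ krylovIdeal A v) :
    p.map (algebraMap K L) ∈ krylovIdeal (A.map (algebraMap K L)) (algebraMap K L ∘ v) := by
  rw [mem_krylovIdeal] at hp ⊢
  ext i
  rw [Matrix.aeval_map_algebraMap, ← RingHom.map_mulVec, hp]
  simp

theorem map_krylovMinpoly_dvd {p : L[X]}
    (hp : p ∈ krylovIdeal (A.map (algebraMap K L)) (algebraMap K L ∘ v)) :
    (krylovMinpoly A v).map (algebraMap K L) ∣ p := by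
  set d := (krylovMinpoly A v).natDegree
  have hf := krylovMinpoly_monic A v
  have hfL := hf.map (algebraMap K L)
  rw [← modByMonic_eq_zero_iff_dvd hfL]
  have hmem : p %ₘ (krylovMinpoly A v).map (algebraMap K L) ∈
      krylovIdeal (A.map (algebraMap K L)) (algebraMap K L ∘ v) := by
    rw [modByMonic_eq_sub_mul_div]
    exact sub_mem hp <| Ideal.mul_mem_right _ _ <|
      map_mem_krylovIdeal L A v (krylovMinpoly_mem_krylovIdeal A v)
  have hdeg : p %ₘ (krylovMinpoly A v).map (algebraMap K L) ∈ degreeLT L d := by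
    rw [mem_degreeLT, ← degree_eq_natDegree hf.ne_zero, ← degree_map _ (algebraMap K L)]
    exact degree_modByMonic_lt _ hfL
  have hc : (krylovMatrix A v d).map (algebraMap K L) *ᵥ degreeLTEquiv L d ⟨_, hdeg⟩ = 0 := by
    rw [← krylovMatrix_map, krylovMatrix_mulVec, LinearEquiv.symm_apply_apply]
    exact hmem
  have hc0 := mulVec_injective_map _ (mulVec_injective_krylovMatrix A v)
    (hc.trans (mulVec_zero _).symm)
  exact (degreeLTEquiv_eq_zero_iff_eq_zero hdeg).mp hc0

theorem krylovMinpoly_map :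
    krylovMinpoly (A.map (algebraMap K L)) (algebraMap K L ∘ v) =
      (krylovMinpoly A v).map (algebraMap K L) :=
  eq_krylovMinpoly _ _ ((krylovMinpoly_monic A v).map _)
    (map_mem_krylovIdeal L A v (krylovMinpoly_mem_krylovIdeal A v))
    fun _ => map_krylovMinpoly_dvd L A v

end FieldExtension

theorem exists_map_eq_krylovMinpoly {R K : Type*} [CommRing R] [IsDomain R]
    [IsIntegrallyClosed R] [Field K] [Algebra R K] [IsFractionRing R K] {n : Type*} [Fintype n]
    [DecidableEq n] (B : Matrix n n R) (w : n → K) :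
    ∃ q : R[X], q.map (algebraMap R K) = krylovMinpoly (B.map (algebraMap R K)) w := by
  have hdvd : krylovMinpoly (B.map (algebraMap R K)) w ∣ B.charpoly.map (algebraMap R K) := by
    rw [← charpoly_map]
    exact (krylovMinpoly_dvd_iff _ _).mpr (charpoly_mem_krylovIdeal _ _)
  obtain ⟨q, hq⟩ := IsIntegrallyClosed.eq_map_mul_C_of_dvd K B.charpoly_monic hdvd
  rw [(krylovMinpoly_monic _ _).leadingCoeff, C_1, mul_one] at hq
  exact ⟨q, hq⟩

section Symmetric

variable {R : Type*} [CommRing R] {n : Type*} [Fintype n] [DecidableEq n] {A : Matrix n n R}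

theorem IsSymm.aeval (hA : A.IsSymm) (p : R[X]) : (aeval A p).IsSymm := by
  induction p using Polynomial.induction_on' with
  | add p q hp hq => rw [map_add]; exact hp.add hq
  | monomial k a => rw [aeval_monomial, ← Algebra.smul_def]; exact (hA.pow k).smul a

theorem aeval_mulVec_of_mulVec_eq_smul {μ : R} {w : n → R} (h : A *ᵥ w = μ • w) (p : R[X]) :
    aeval A p *ᵥ w = p.eval μ • w := by
  induction p using Polynomial.induction_on' with
  | add p q hp hq => rw [map_add, add_mulVec, hp, hq, eval_add, add_smul]
  | monomial k a =>
    have hpow : A ^ k *ᵥ w = μ ^ k • w := by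
      induction k with
      | zero => simp
      | succ k ih => rw [pow_succ', ← mulVec_mulVec, ih, mulVec_smul, h, smul_smul, pow_succ]
    rw [aeval_monomial, ← Algebra.smul_def, smul_mulVec, hpow, smul_smul, eval_monomial]

theorem dotProduct_aeval_mulVec (hA : A.IsSymm) {μ : R} {w : n → R} (h : A *ᵥ w = μ • w)
    (p : R[X]) (u : n → R) : w ⬝ᵥ (aeval A p *ᵥ u) = p.eval μ * (w ⬝ᵥ u) := by
  rw [dotProduct_mulVec, ← mulVec_transpose, (hA.aeval p).eq, aeval_mulVec_of_mulVec_eq_smul h,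
    smul_dotProduct, smul_eq_mul]

end Symmetric

section MainEigenvalues

variable {n : ℕ} {A : Matrix (Fin n) (Fin n) ℝ}

theorem IsMainEig.eval_eq_zero_of_mem_krylovIdeal (hA : A.IsSymm) {μ : ℝ} (hμ : A.IsMainEig μ)
    {p : ℝ[X]} (hp : p ∈ krylovIdeal A fun _ => 1) : p.eval μ = 0 := by
  obtain ⟨w, hw, hw1⟩ := hμ
  have h := dotProduct_aeval_mulVec hA hw p fun _ => 1
  rw [mem_krylovIdeal.mp hp, dotProduct_zero] at h
  exact (mul_eq_zero.mp h.symm).resolve_right hw1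

theorem mem_krylovIdeal_of_eval_isMainEig_eq_zero (hA : A.IsSymm) {p : ℝ[X]}
    (hp : ∀ μ, A.IsMainEig μ → p.eval μ = 0) : p ∈ krylovIdeal A fun _ => 1 := by
  have hH : A.IsHermitian := isHermitian_iff_isSymm.mpr hA
  set b := hH.eigenvectorBasis
  set u := aeval A p *ᵥ fun _ => (1 : ℝ)
  have horth : ∀ i, ⇑(b i) ⬝ᵥ u = 0 := by
    intro i
    have hb := hH.mulVec_eigenvectorBasis i
    rw [dotProduct_aeval_mulVec hA hb]
    by_cases hμ : A.IsMainEig (hH.eigenvalues i)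
    · rw [hp _ hμ, zero_mul]
    · rw [not_ne_iff.mp fun h => hμ ⟨_, hb, h⟩, mul_zero]
  have hrepr : b.repr (WithLp.toLp 2 u) = 0 := by
    ext i
    rw [b.repr_apply_apply, EuclideanSpace.inner_toLp_toLp]
    simpa [dotProduct_comm] using horth i
  rw [mem_krylovIdeal]
  simpa using hrepr

theorem krylovMinpoly_eq_prod_mainEig (hA : A.IsSymm) {S : Finset ℝ}
    (hS : ∀ μ, μ ∈ S ↔ A.IsMainEig μ) : krylovMinpoly A (fun _ => 1) = ∏ μ ∈ S, (X - C μ) := by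
  refine eq_krylovMinpoly _ _ (monic_prod_of_monic _ _ fun μ _ => monic_X_sub_C μ)
    (mem_krylovIdeal_of_eval_isMainEig_eq_zero hA fun μ hμ => ?_) fun p hp => ?_
  · rw [eval_prod]
    exact Finset.prod_eq_zero ((hS μ).mpr hμ) (by simp)
  · refine Finset.prod_dvd_of_coprime (fun μ _ ν _ hne => ?_) fun μ hμ => ?_
    · exact isCoprime_X_sub_C_of_isUnit_sub (sub_ne_zero_of_ne hne).isUnit
    · exact dvd_iff_isRoot.mpr (((hS μ).mp hμ).eval_eq_zero_of_mem_krylovIdeal hA hp)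

end MainEigenvalues

end Matrix

theorem SimpleGraph.adjMatrix_map {V R S : Type*} (G : SimpleGraph V) [DecidableRel G.Adj]
    [NonAssocSemiring R] [NonAssocSemiring S] (f : R →+* S) :
    (G.adjMatrix R).map f = G.adjMatrix S := by
  ext i j
  simp [adjMatrix_apply, apply_ite f]

/-- The main characteristic polynomial `m_G(x) = ∏ (x - μ)` over the distinct main
eigenvalues of a graph `G` has integer coefficients: it is the image of a polynomial
in `ℤ[x]`. -/
theorem mainCharPoly_integer_coefficients {n : ℕ} (G : SimpleGraph (Fin n))
    [DecidableRel G.Adj] (A : Matrix (Fin n) (Fin n) ℝ) (hA : A = G.adjMatrix ℝ)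
    (S : Finset ℝ) (hS : ∀ μ, μ ∈ S ↔ A.IsMainEig μ) :
    ∃ q : Polynomial ℤ, q.map (algebraMap ℤ ℝ) = ∏ μ ∈ S, (X - C μ) := by
  obtain ⟨q, hq⟩ := (G.adjMatrix ℤ).exists_map_eq_krylovMinpoly fun _ => (1 : ℚ)
  rw [G.adjMatrix_map] at hq
  have hones : (fun _ => (1 : ℝ)) = algebraMap ℚ ℝ ∘ fun _ : Fin n => (1 : ℚ) := by
    funext; simp
  refine ⟨q, ?_⟩
  rw [← krylovMinpoly_eq_prod_mainEig (hA ▸ G.isSymm_adjMatrix) hS, hA,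
    ← G.adjMatrix_map (algebraMap ℚ ℝ), hones, krylovMinpoly_map, ← hq, Polynomial.map_map,
    ← IsScalarTower.algebraMap_eq]
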